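/- In the 3-SAT reduction data-graph for subset repairs (path-expression version): given a 3CNF formula φ with variables x₁,…,x_n and clauses c₁,…,c_m, construct the data-graph G with nodes {⊥_i, ⊤_i : 1 ≤ i ≤ n} ∪ {c_j : 1 ≤ j ≤ m}, 'needs' edges from c_j to ⊤_i when x_i ∈ c_j and to ⊥_i when ¬x_i ∈ c_j, 'exists' edges forming the described cyclic structure through all clause nodes and the pairs of boolean nodes, 'unique' edges between every ordered pair of nodes except pairs of the form (⊤_i, ⊥_i), and 'valid' edges between every ordered pair except pairs (c_j, ⋆_i) with ⋆ ∈ {⊤, ⊥}. Let R = {exists⁺, unique, valid ∪ needs·valid}. Then φ is satisfiable if and only if G has a nonempty subset repair with respect to R. -/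
import Mathlib


/-- A data-graph: a set of nodes, an edge labeling, and a data-value assignment. -/
structure DataGraph (V E Dv : Type) where
  nodes : Set V
  edges : V → V → Set E
  data : V → Dv

mutual
/-- Reg-GXPath path expressions. -/
inductive PExp (E Dv : Type) where
  | eps : PExp E Dv
  | wild : PExp E Dv
  | lab : E → PExp E Dv
  | inv : E → PExp E Dv
  | test : NExp E Dv → PExp E Dv
  | comp : PExp E Dv → PExp E Dv → PExp E Dv
  | union : PExp E Dv → PExp E Dv → PExp E Dv
  | inter : PExp E Dv → PExp E Dv → PExp E Dv
  | star : PExp E Dv → PExp E Dv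
  | compl : PExp E Dv → PExp E Dv
  | iter : PExp E Dv → ℕ → ℕ → PExp E Dv
/-- Reg-GXPath node expressions. -/
inductive NExp (E Dv : Type) where
  | neg : NExp E Dv → NExp E Dv
  | and : NExp E Dv → NExp E Dv → NExp E Dv
  | or : NExp E Dv → NExp E Dv → NExp E Dv
  | diam : PExp E Dv → NExp E Dv
  | eqc : Dv → NExp E Dv
  | neqc : Dv → NExp E Dv
  | cmpEq : PExp E Dv → PExp E Dv → NExp E Dv
  | cmpNeq : PExp E Dv → PExp E Dv → NExp E Dv
end

variable {V E Dv : Type}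

/-- Relational composition of binary relations presented as sets of pairs. -/
def dgComp (R S : Set (V × V)) : Set (V × V) := {p | ∃ y, (p.1, y) ∈ R ∧ (y, p.2) ∈ S}

/-- The identity relation on the nodes of a data-graph. -/
def DataGraph.idRel (G : DataGraph V E Dv) : Set (V × V) := {p | p.1 = p.2 ∧ p.1 ∈ G.nodes}

/-- Iterated relational composition, with `I` as the 0-th power (identity). -/
def dgPow (I R : Set (V × V)) : ℕ → Set (V × V)
  | 0 => I
  | k + 1 => dgComp (dgPow I R k) R

mutual
/-- Semantics of path expressions on a data-graph: a set of pairs of nodes. -/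
def psem (G : DataGraph V E Dv) : PExp E Dv → Set (V × V)
  | .eps => G.idRel
  | .wild => {p | p.1 ∈ G.nodes ∧ p.2 ∈ G.nodes ∧ (G.edges p.1 p.2).Nonempty}
  | .lab a => {p | p.1 ∈ G.nodes ∧ p.2 ∈ G.nodes ∧ a ∈ G.edges p.1 p.2}
  | .inv a => {p | p.1 ∈ G.nodes ∧ p.2 ∈ G.nodes ∧ a ∈ G.edges p.2 p.1}
  | .test φ => {p | p.1 = p.2 ∧ p.1 ∈ nsem G φ}
  | .comp α β => dgComp (psem G α) (psem G β)
  | .union α β => psem G α ∪ psem G β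
  | .inter α β => psem G α ∩ psem G β
  | .star α => G.idRel ∪ {p | Relation.TransGen (fun x y => (x, y) ∈ psem G α) p.1 p.2}
  | .compl α => {p | p.1 ∈ G.nodes ∧ p.2 ∈ G.nodes ∧ p ∉ psem G α}
  | .iter α n m => {p | ∃ k, n ≤ k ∧ k ≤ m ∧ p ∈ dgPow G.idRel (psem G α) k}
/-- Semantics of node expressions on a data-graph: a set of nodes. -/
def nsem (G : DataGraph V E Dv) : NExp E Dv → Set V
  | .neg φ => {v | v ∈ G.nodes ∧ v ∉ nsem G φ}
  | .and φ ψ => nsem G φ ∩ nsem G ψ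
  | .or φ ψ => nsem G φ ∪ nsem G ψ
  | .diam α => {v | ∃ w, (v, w) ∈ psem G α}
  | .eqc c => {v | v ∈ G.nodes ∧ G.data v = c}
  | .neqc c => {v | v ∈ G.nodes ∧ G.data v ≠ c}
  | .cmpEq α β => {v | ∃ v' v'', (v, v') ∈ psem G α ∧ (v, v'') ∈ psem G β ∧ G.data v' = G.data v''}
  | .cmpNeq α β => {v | ∃ v' v'', (v, v') ∈ psem G α ∧ (v, v'') ∈ psem G β ∧ G.data v' ≠ G.data v''}
end

mutual
/-- Positive (complement/negation-free) path expressions. -/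
def PExp.Positive : PExp E Dv → Prop
  | .eps => True
  | .wild => True
  | .lab _ => True
  | .inv _ => True
  | .test φ => φ.Positive
  | .comp α β => α.Positive ∧ β.Positive
  | .union α β => α.Positive ∧ β.Positive
  | .inter α β => α.Positive ∧ β.Positive
  | .star α => α.Positive
  | .compl _ => False
  | .iter α _ _ => α.Positive
/-- Positive (negation-free) node expressions. -/
def NExp.Positive : NExp E Dv → Prop
  | .neg _ => False
  | .and φ ψ => φ.Positive ∧ ψ.Positive
  | .or φ ψ => φ.Positive ∧ ψ.Positive
  | .diam α => α.Positive
  | .eqc _ => True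
  | .neqc _ => True
  | .cmpEq α β => α.Positive ∧ β.Positive
  | .cmpNeq α β => α.Positive ∧ β.Positive
end

/-- `G.Subgraph G'` : `G` is a sub-data-graph of `G'`. -/
def DataGraph.Subgraph (G G' : DataGraph V E Dv) : Prop :=
  G.nodes ⊆ G'.nodes ∧ (∀ v ∈ G.nodes, ∀ w ∈ G.nodes, G.edges v w ⊆ G'.edges v w) ∧
    ∀ v ∈ G.nodes, G.data v = G'.data v

/-- Consistency of a data-graph w.r.t. sets of path and node constraints. -/
def DataGraph.Consistent (G : DataGraph V E Dv)
    (Rp : Set (PExp E Dv)) (Rn : Set (NExp E Dv)) : Prop :=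
  (∀ α ∈ Rp, ∀ v ∈ G.nodes, ∀ w ∈ G.nodes, (v, w) ∈ psem G α) ∧
    (∀ φ ∈ Rn, ∀ v ∈ G.nodes, v ∈ nsem G φ)

/-- `H` is a subset repair of `G` w.r.t. constraints `Rp ∪ Rn`. -/
def IsSubsetRepair (H G : DataGraph V E Dv)
    (Rp : Set (PExp E Dv)) (Rn : Set (NExp E Dv)) : Prop :=
  H.Consistent Rp Rn ∧ H.Subgraph G ∧
    ∀ K : DataGraph V E Dv, K.Consistent Rp Rn → K.Subgraph G → H.Subgraph K → K.Subgraph H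

/-- `H` is a superset repair of `G` w.r.t. constraints `Rp ∪ Rn`. -/
def IsSupersetRepair (H G : DataGraph V E Dv)
    (Rp : Set (PExp E Dv)) (Rn : Set (NExp E Dv)) : Prop :=
  H.Consistent Rp Rn ∧ G.Subgraph H ∧
    ∀ K : DataGraph V E Dv, K.Consistent Rp Rn → G.Subgraph K → K.Subgraph H → H.Subgraph K
/-- Nodes of the 3-SAT reduction graph: two boolean nodes per variable and one per clause. -/
inductive SatNode (n m : ℕ) where
  | pos : Fin n → SatNode n m
  | neg : Fin n → SatNode n m
  | cls : Fin m → SatNode n m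

/-- Edge labels of the reduction. -/
inductive SatLab where
  | needs | exi | uniq | valid

/-- The boolean node corresponding to a literal (variable, polarity). -/
def litNode {n m : ℕ} (L : Fin n × Bool) : SatNode n m :=
  if L.2 then .pos L.1 else .neg L.1

/-- `needs` edges: from each clause node to the boolean nodes of its literals. -/
def needsE {n m : ℕ} (C : Fin m → Fin 3 → Fin n × Bool) (u w : SatNode n m) : Prop :=
  ∃ j k, u = .cls j ∧ w = litNode (C j k)

/-- `exists` edges: the cyclic structure through all clause nodes and boolean nodes. -/
def exiE {n m : ℕ} (u w : SatNode n m) : Prop :=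
  (∃ j j' : Fin m, u = .cls j ∧ w = .cls j' ∧ (j' : ℕ) = (j : ℕ) + 1) ∨
  (∃ (j : Fin m) (i : Fin n), u = .cls j ∧ (j : ℕ) = m - 1 ∧
      (w = .pos i ∨ w = .neg i) ∧ (i : ℕ) = 0) ∨
  (∃ (i : Fin n) (j : Fin m), (u = .pos i ∨ u = .neg i) ∧ (i : ℕ) = n - 1 ∧
      w = .cls j ∧ (j : ℕ) = 0) ∨
  (∃ i i' : Fin n, (u = .pos i ∨ u = .neg i) ∧ (w = .pos i' ∨ w = .neg i') ∧
      (i' : ℕ) = (i : ℕ) + 1)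

/-- `unique` edges: every ordered pair except the pairs (⊤ᵢ, ⊥ᵢ). -/
def uniqE {n m : ℕ} (u w : SatNode n m) : Prop :=
  ¬ ∃ i : Fin n, u = .pos i ∧ w = .neg i

/-- `valid` edges: every ordered pair except the pairs (cⱼ, ⋆ᵢ). -/
def validE {n m : ℕ} (u w : SatNode n m) : Prop :=
  ¬ ∃ (j : Fin m) (i : Fin n), u = .cls j ∧ (w = .pos i ∨ w = .neg i)

/-- The 3-SAT reduction data-graph. -/
def satGraph {n m : ℕ} (C : Fin m → Fin 3 → Fin n × Bool) :
    DataGraph (SatNode n m) SatLab Unit :=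
  ⟨Set.univ,
   fun u w => {l | (l = .needs ∧ needsE C u w) ∨ (l = .exi ∧ exiE u w) ∨
                   (l = .uniq ∧ uniqE u w) ∨ (l = .valid ∧ validE u w)},
   fun _ => ()⟩

/-- The fixed constraint set R = {exists⁺, unique, valid ∪ needs·valid}. -/
def satR : Set (PExp SatLab Unit) :=
  {PExp.comp (.lab .exi) (.star (.lab .exi)),
   PExp.lab .uniq,
   PExp.union (.lab .valid) (.comp (.lab .needs) (.lab .valid))}

open Relation

section SatAux

variable {n m : ℕ}

lemma psem_lab_iff {V E Dv : Type} (G : DataGraph V E Dv) (a : E) (p : V × V) :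
    p ∈ psem G (.lab a) ↔ p.1 ∈ G.nodes ∧ p.2 ∈ G.nodes ∧ a ∈ G.edges p.1 p.2 := by
  simp [psem]

lemma satEdge_iff (C : Fin m → Fin 3 → Fin n × Bool) (u w : SatNode n m) (l : SatLab) :
    l ∈ (satGraph C).edges u w ↔
      ((l = .needs ∧ needsE C u w) ∨ (l = .exi ∧ exiE u w) ∨
       (l = .uniq ∧ uniqE u w) ∨ (l = .valid ∧ validE u w)) := Iff.rfl

lemma exi_mem_satR : (PExp.comp (.lab .exi) (.star (.lab .exi)) : PExp SatLab Unit) ∈ satR :=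
  Set.mem_insert _ _
lemma uniq_mem_satR : (PExp.lab .uniq : PExp SatLab Unit) ∈ satR :=
  Set.mem_insert_iff.mpr (Or.inr (Set.mem_insert _ _))
lemma valid_mem_satR :
    (PExp.union (.lab .valid) (.comp (.lab .needs) (.lab .valid)) : PExp SatLab Unit) ∈ satR :=
  Set.mem_insert_iff.mpr (Or.inr (Set.mem_insert_iff.mpr (Or.inr (Set.mem_singleton _))))

lemma edge_exi {C : Fin m → Fin 3 → Fin n × Bool} {H : DataGraph (SatNode n m) SatLab Unit}
    (hsub : H.Subgraph (satGraph C)) {z u : SatNode n m} (hz : z ∈ H.nodes) (hu : u ∈ H.nodes)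
    (h : SatLab.exi ∈ H.edges z u) : exiE z u := by
  have h2 := (satEdge_iff C z u _).mp (hsub.2.1 z hz u hu h)
  rcases h2 with ⟨h3,_⟩|⟨_,h4⟩|⟨h3,_⟩|⟨h3,_⟩ <;> first | exact h4 | simp at h3

lemma edge_uniq {C : Fin m → Fin 3 → Fin n × Bool} {H : DataGraph (SatNode n m) SatLab Unit}
    (hsub : H.Subgraph (satGraph C)) {z u : SatNode n m} (hz : z ∈ H.nodes) (hu : u ∈ H.nodes)
    (h : SatLab.uniq ∈ H.edges z u) : uniqE z u := by
  have h2 := (satEdge_iff C z u _).mp (hsub.2.1 z hz u hu h)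
  rcases h2 with ⟨h3,_⟩|⟨h3,_⟩|⟨_,h4⟩|⟨h3,_⟩ <;> first | exact h4 | simp at h3

lemma edge_needs {C : Fin m → Fin 3 → Fin n × Bool} {H : DataGraph (SatNode n m) SatLab Unit}
    (hsub : H.Subgraph (satGraph C)) {z u : SatNode n m} (hz : z ∈ H.nodes) (hu : u ∈ H.nodes)
    (h : SatLab.needs ∈ H.edges z u) : needsE C z u := by
  have h2 := (satEdge_iff C z u _).mp (hsub.2.1 z hz u hu h)
  rcases h2 with ⟨_,h4⟩|⟨h3,_⟩|⟨h3,_⟩|⟨h3,_⟩ <;> first | exact h4 | simp at h3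

lemma edge_valid {C : Fin m → Fin 3 → Fin n × Bool} {H : DataGraph (SatNode n m) SatLab Unit}
    (hsub : H.Subgraph (satGraph C)) {z u : SatNode n m} (hz : z ∈ H.nodes) (hu : u ∈ H.nodes)
    (h : SatLab.valid ∈ H.edges z u) : validE z u := by
  have h2 := (satEdge_iff C z u _).mp (hsub.2.1 z hz u hu h)
  rcases h2 with ⟨h3,_⟩|⟨h3,_⟩|⟨h3,_⟩|⟨_,h4⟩ <;> first | exact h4 | simp at h3

lemma notBothKey {C : Fin m → Fin 3 → Fin n × Bool} {K : DataGraph (SatNode n m) SatLab Unit}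
    (hK : K.Consistent satR ∅) (hsub : K.Subgraph (satGraph C)) (i : Fin n)
    (hp : SatNode.pos i ∈ K.nodes) (hq : SatNode.neg i ∈ K.nodes) : False := by
  have h := hK.1 _ uniq_mem_satR _ hp _ hq
  have h' := (psem_lab_iff _ _ _).mp h
  exact edge_uniq hsub hp hq h'.2.2 ⟨i, rfl, rfl⟩

end SatAux

section SatFwd

variable {n m : ℕ}

/-- Nodes of the repair determined by an assignment `f`. -/
def repNodes (n m : ℕ) (f : Fin n → Bool) : Set (SatNode n m) :=
  fun u => match u with
  | .pos i => f i = true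
  | .neg i => f i = false
  | .cls _ => True

def repGraph (C : Fin m → Fin 3 → Fin n × Bool) (f : Fin n → Bool) :
    DataGraph (SatNode n m) SatLab Unit :=
  ⟨repNodes n m f, (satGraph C).edges, fun _ => ()⟩

def bnode (n m : ℕ) (f : Fin n → Bool) (i : Fin n) : SatNode n m :=
  if f i then .pos i else .neg i

lemma bnode_mem (f : Fin n → Bool) (i : Fin n) : bnode n m f i ∈ repNodes n m f := by
  unfold bnode
  by_cases h : f i
  · rw [if_pos h]; exact h
  · rw [if_neg h]; exact (Bool.not_eq_true _).mp h

lemma bnode_or (f : Fin n → Bool) (i : Fin n) :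
    bnode n m f i = .pos i ∨ bnode n m f i = .neg i := by
  by_cases h : f i <;> simp [bnode, h]

lemma cls_mem (f : Fin n → Bool) (j : Fin m) : (SatNode.cls j : SatNode n m) ∈ repNodes n m f :=
  trivial

lemma rep_edge_iff (C : Fin m → Fin 3 → Fin n × Bool) (f : Fin n → Bool) (x y : SatNode n m) :
    (x, y) ∈ psem (repGraph C f) (.lab .exi) ↔
      (x ∈ repNodes n m f ∧ y ∈ repNodes n m f ∧ exiE x y) := by
  rw [psem_lab_iff]
  constructor
  · rintro ⟨h1, h2, h3⟩
    exact ⟨h1, h2, edge_exi (C := C) (H := repGraph C f)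
      ⟨fun _ _ => trivial, fun _ _ _ _ => subset_rfl, fun _ _ => rfl⟩ h1 h2 h3⟩
  · rintro ⟨h1, h2, h3⟩
    exact ⟨h1, h2, Or.inr (Or.inl ⟨rfl, h3⟩)⟩

lemma rep_reach (C : Fin m → Fin 3 → Fin n × Bool) (f : Fin n → Bool) (hn : 0 < n)
    (hm : 0 < m) :
    ∀ v ∈ repNodes n m f, ∀ w ∈ repNodes n m f,
      Relation.TransGen (fun x y => (x, y) ∈ psem (repGraph C f) (.lab .exi)) v w := by
  set r : SatNode n m → SatNode n m → Prop :=
    fun x y => (x, y) ∈ psem (repGraph C f) (.lab .exi) with hr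
  have mkr : ∀ x ∈ repNodes n m f, ∀ y ∈ repNodes n m f, exiE x y → r x y := by
    intro x hx y hy he; exact (rep_edge_iff C f x y).mpr ⟨hx, hy, he⟩
  -- single steps
  have step_cls : ∀ (a : ℕ) (h0 : a < m) (h1 : a + 1 < m),
      r (.cls ⟨a, h0⟩) (.cls ⟨a + 1, h1⟩) := by
    intro a h0 h1
    exact mkr _ (cls_mem f _) _ (cls_mem f _) (Or.inl ⟨⟨a, h0⟩, ⟨a+1, h1⟩, rfl, rfl, rfl⟩)
  have step_bool : ∀ (a : ℕ) (h0 : a < n) (h1 : a + 1 < n),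
      r (bnode n m f ⟨a, h0⟩) (bnode n m f ⟨a + 1, h1⟩) := by
    intro a h0 h1
    exact mkr _ (bnode_mem f _) _ (bnode_mem f _)
      (Or.inr (Or.inr (Or.inr ⟨⟨a, h0⟩, ⟨a+1, h1⟩, bnode_or f _, bnode_or f _, rfl⟩)))
  have step_cb : r (.cls ⟨m - 1, by omega⟩) (bnode n m f ⟨0, hn⟩) := by
    exact mkr _ (cls_mem f _) _ (bnode_mem f _)
      (Or.inr (Or.inl ⟨⟨m - 1, by omega⟩, ⟨0, hn⟩, rfl, rfl, bnode_or f _, rfl⟩))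
  have step_bc : r (bnode n m f ⟨n - 1, by omega⟩) (.cls ⟨0, hm⟩) := by
    exact mkr _ (bnode_mem f _) _ (cls_mem f _)
      (Or.inr (Or.inr (Or.inl ⟨⟨n - 1, by omega⟩, ⟨0, hm⟩, bnode_or f _, rfl, rfl, rfl⟩)))
  -- chains
  have chain_cls : ∀ (a b : ℕ) (hab : a ≤ b) (hb : b < m),
      Relation.ReflTransGen r (.cls ⟨a, by omega⟩) (.cls ⟨b, hb⟩) := by
    intro a b hab
    induction b, hab using Nat.le_induction with
    | base => intro hb; exact Relation.ReflTransGen.refl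
    | succ b hab ih =>
      intro hb
      exact Relation.ReflTransGen.tail (ih (by omega)) (step_cls b (by omega) hb)
  have chain_bool : ∀ (a b : ℕ) (hab : a ≤ b) (hb : b < n),
      Relation.ReflTransGen r (bnode n m f ⟨a, by omega⟩) (bnode n m f ⟨b, hb⟩) := by
    intro a b hab
    induction b, hab using Nat.le_induction with
    | base => intro hb; exact Relation.ReflTransGen.refl
    | succ b hab ih =>
      intro hb
      exact Relation.ReflTransGen.tail (ih (by omega)) (step_bool b (by omega) hb)
  -- every node reaches cls (m-1)
  have toLast : ∀ v ∈ repNodes n m f, Relation.ReflTransGen r v (.cls ⟨m - 1, by omega⟩) := by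
    intro v hv
    have fromB : ∀ i : Fin n, Relation.ReflTransGen r (bnode n m f i) (.cls ⟨m - 1, by omega⟩) := by
      intro i
      have c1 : Relation.ReflTransGen r (bnode n m f i) (bnode n m f ⟨n - 1, by omega⟩) := by
        have := chain_bool i (n - 1) (by omega) (by omega)
        simpa using this
      exact (c1.tail step_bc).trans (chain_cls 0 (m - 1) (by omega) (by omega))
    match v with
    | .cls j =>
      have := chain_cls j (m - 1) (by omega) (by omega)
      simpa using this
    | .pos i =>
      have hv' : f i = true := hv
      have : bnode n m f i = .pos i := by simp [bnode, hv']
      rw [← this]; exact fromB i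
    | .neg i =>
      have hv' : f i = false := hv
      have : bnode n m f i = .neg i := by simp [bnode, hv']
      rw [← this]; exact fromB i
  -- cls (m-1) reaches every node via at least one step
  have fromLast : ∀ w ∈ repNodes n m f,
      Relation.TransGen r (.cls ⟨m - 1, by omega⟩) w := by
    intro w hw
    have reachB : ∀ i : Fin n, Relation.ReflTransGen r (bnode n m f ⟨0, hn⟩) (bnode n m f i) := by
      intro i
      have := chain_bool 0 i (by omega) i.isLt
      simpa using this
    match w with
    | .cls j =>
      refine Relation.TransGen.head' step_cb ?_
      refine ((reachB ⟨n - 1, by omega⟩).tail step_bc).trans ?_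
      have := chain_cls 0 j (by omega) j.isLt
      simpa using this
    | .pos i =>
      have hv' : f i = true := hw
      have hb : bnode n m f i = .pos i := by simp [bnode, hv']
      refine Relation.TransGen.head' step_cb ?_
      rw [← hb]; exact reachB i
    | .neg i =>
      have hv' : f i = false := hw
      have hb : bnode n m f i = .neg i := by simp [bnode, hv']
      refine Relation.TransGen.head' step_cb ?_
      rw [← hb]; exact reachB i
  intro v hv w hw
  exact Relation.TransGen.trans_right (toLast v hv) (fromLast w hw)

end SatFwd

section SatFwd2

variable {n m : ℕ}

lemma rep_subgraph (C : Fin m → Fin 3 → Fin n × Bool) (f : Fin n → Bool) :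
    (repGraph C f).Subgraph (satGraph C) :=
  ⟨fun _ _ => trivial, fun _ _ _ _ => subset_rfl, fun _ _ => rfl⟩

lemma rep_consistent (C : Fin m → Fin 3 → Fin n × Bool) (f : Fin n → Bool) (hn : 0 < n)
    (hm : 0 < m) (hf : ∀ j : Fin m, ∃ k : Fin 3, f (C j k).1 = (C j k).2) :
    (repGraph C f).Consistent satR ∅ := by
  constructor
  · intro α hα
    simp only [satR, Set.mem_insert_iff, Set.mem_singleton_iff] at hα
    rcases hα with rfl | rfl | rfl
    · -- exists⁺
      intro v hv w hw
      have key := rep_reach C f hn hm v hv w hw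
      obtain ⟨c, hc, hcw⟩ := Relation.TransGen.head'_iff.mp key
      rcases Relation.reflTransGen_iff_eq_or_transGen.mp hcw with rfl | htg
      · exact ⟨w, hc, Or.inl ⟨rfl, ((rep_edge_iff C f v w).mp hc).2.1⟩⟩
      · exact ⟨c, hc, Or.inr htg⟩
    · -- unique
      intro v hv w hw
      refine (psem_lab_iff _ _ _).mpr ⟨hv, hw, Or.inr (Or.inr (Or.inl ⟨rfl, ?_⟩))⟩
      rintro ⟨i, rfl, rfl⟩
      have h1 : f i = true := hv
      have h2 : f i = false := hw
      simp [h1] at h2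
    · -- valid ∪ needs·valid
      intro v hv w hw
      by_cases hval : validE v w
      · exact Or.inl ((psem_lab_iff _ _ _).mpr ⟨hv, hw, Or.inr (Or.inr (Or.inr ⟨rfl, hval⟩))⟩)
      · right
        simp only [validE, not_not] at hval
        obtain ⟨j, i, rfl, hwi⟩ := hval
        obtain ⟨k, hk⟩ := hf j
        refine ⟨litNode (C j k), ?_, ?_⟩
        · refine (psem_lab_iff _ _ _).mpr ⟨hv, ?_, Or.inl ⟨rfl, j, k, rfl, rfl⟩⟩
          unfold litNode
          by_cases h2 : (C j k).2
          · rw [if_pos h2]; rw [h2] at hk; exact hk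
          · rw [if_neg h2]
            have : (C j k).2 = false := (Bool.not_eq_true _).mp h2
            rw [this] at hk; exact hk
        · refine (psem_lab_iff _ _ _).mpr ⟨?_, hw, Or.inr (Or.inr (Or.inr ⟨rfl, ?_⟩))⟩
          · unfold litNode
            by_cases h2 : (C j k).2
            · rw [if_pos h2]; rw [h2] at hk; exact hk
            · rw [if_neg h2]
              have : (C j k).2 = false := (Bool.not_eq_true _).mp h2
              rw [this] at hk; exact hk
          · rintro ⟨j', i', heq, -⟩
            unfold litNode at heq
            by_cases h2 : (C j k).2
            · rw [if_pos h2] at heq; simp at heq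
            · rw [if_neg h2] at heq; simp at heq
  · intro φ hφ; exact absurd hφ (Set.notMem_empty φ)

lemma rep_maximal (C : Fin m → Fin 3 → Fin n × Bool) (f : Fin n → Bool)
    (K : DataGraph (SatNode n m) SatLab Unit) (hK : K.Consistent satR ∅)
    (hKG : K.Subgraph (satGraph C)) (hHK : (repGraph C f).Subgraph K) :
    K.Subgraph (repGraph C f) := by
  have hnodes : K.nodes ⊆ (repGraph C f).nodes := by
    intro u hu
    match u with
    | .cls j => exact cls_mem f j
    | .pos i =>
      by_cases h : f i
      · exact h
      · exfalso
        have hn : (SatNode.neg i : SatNode n m) ∈ (repGraph C f).nodes :=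
          (Bool.not_eq_true _).mp h
        exact notBothKey hK hKG i hu (hHK.1 hn)
    | .neg i =>
      by_cases h : f i
      · exfalso
        have hp : (SatNode.pos i : SatNode n m) ∈ (repGraph C f).nodes := h
        exact notBothKey hK hKG i (hHK.1 hp) hu
      · exact (Bool.not_eq_true _).mp h
  exact ⟨hnodes, fun v hv w hw => hKG.2.1 v hv w hw, fun v _ => rfl⟩

end SatFwd2

section SatBwd

variable {n m : ℕ} {C : Fin m → Fin 3 → Fin n × Bool} {H : DataGraph (SatNode n m) SatLab Unit}

lemma pred_exists (hK : H.Consistent satR ∅) (hsub : H.Subgraph (satGraph C))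
    {u : SatNode n m} (hu : u ∈ H.nodes) : ∃ w ∈ H.nodes, exiE w u := by
  have h := hK.1 _ exi_mem_satR _ hu _ hu
  obtain ⟨y, hy1, hy2⟩ := h
  have hy1' := (psem_lab_iff _ _ _).mp hy1
  rcases hy2 with ⟨heq, -⟩ | htg
  · have hyu : y = u := heq
    rw [hyu] at hy1'
    exact ⟨u, hu, edge_exi hsub hu hu hy1'.2.2⟩
  · cases htg with
    | single hr =>
      have hr' := (psem_lab_iff _ _ _).mp hr
      exact ⟨y, hr'.1, edge_exi hsub hr'.1 hr'.2.1 hr'.2.2⟩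
    | tail _ hr =>
      rename_i b _
      have hr' := (psem_lab_iff _ _ _).mp hr
      exact ⟨b, hr'.1, edge_exi hsub hr'.1 hr'.2.1 hr'.2.2⟩

lemma idx_eq {a i' : Fin n} {u : SatNode n m} (h1 : u = .pos a ∨ u = .neg a)
    (h2 : u = .pos i' ∨ u = .neg i') : i' = a := by
  rcases h1 with rfl | rfl <;> rcases h2 with h2 | h2 <;> cases h2 <;> rfl

lemma stepC (hK : H.Consistent satR ∅) (hsub : H.Subgraph (satGraph C))
    (jv : ℕ) (h0 : jv < m) (h1 : jv + 1 < m)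
    (h : SatNode.cls ⟨jv + 1, h1⟩ ∈ H.nodes) : SatNode.cls ⟨jv, h0⟩ ∈ H.nodes := by
  obtain ⟨w, hw, he⟩ := pred_exists hK hsub h
  rcases he with ⟨j, j', h1', h2', h3'⟩ | ⟨j, i, h1', h2', h3', h4'⟩ |
    ⟨i, j, h1', h2', h3', h4'⟩ | ⟨i, i', h1', h2', h3'⟩
  · cases h2'
    have hj : jv + 1 = (j : ℕ) + 1 := h3'
    have : (⟨jv, h0⟩ : Fin m) = j := by
      apply Fin.ext; show jv = (j : ℕ); omega
    rw [this, ← h1']; exact hw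
  · rcases h3' with h3' | h3' <;> cases h3'
  · cases h3'
    have : jv + 1 = 0 := h4'
    omega
  · rcases h2' with h2' | h2' <;> cases h2'

lemma stepB (hK : H.Consistent satR ∅) (hsub : H.Subgraph (satGraph C))
    (iv : ℕ) (h0 : iv < n) (h1 : iv + 1 < n) {u : SatNode n m} (hu : u ∈ H.nodes)
    (hsh : u = .pos ⟨iv + 1, h1⟩ ∨ u = .neg ⟨iv + 1, h1⟩) :
    SatNode.pos ⟨iv, h0⟩ ∈ H.nodes ∨ SatNode.neg ⟨iv, h0⟩ ∈ H.nodes := by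
  obtain ⟨w, hw, he⟩ := pred_exists hK hsub hu
  rcases he with ⟨j, j', h1', h2', h3'⟩ | ⟨j, i, h1', h2', h3', h4'⟩ |
    ⟨i, j, h1', h2', h3', h4'⟩ | ⟨i, i', h1', h2', h3'⟩
  · rcases hsh with rfl | rfl <;> cases h2'
  · obtain rfl : i = ⟨iv + 1, h1⟩ := idx_eq hsh h3'
    have : iv + 1 = 0 := h4'
    omega
  · rcases hsh with rfl | rfl <;> cases h3'
  · obtain rfl : i' = ⟨iv + 1, h1⟩ := idx_eq hsh h2'
    have hi : iv + 1 = (i : ℕ) + 1 := h3'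
    have hieq : (⟨iv, h0⟩ : Fin n) = i := by
      apply Fin.ext; show iv = (i : ℕ); omega
    rcases h1' with rfl | rfl
    · left; rw [hieq]; exact hw
    · right; rw [hieq]; exact hw

lemma stepC0 (hK : H.Consistent satR ∅) (hsub : H.Subgraph (satGraph C)) (hn : 0 < n)
    (hm : 0 < m) (h : SatNode.cls ⟨0, hm⟩ ∈ H.nodes) :
    SatNode.pos ⟨n - 1, by omega⟩ ∈ H.nodes ∨ SatNode.neg ⟨n - 1, by omega⟩ ∈ H.nodes := by
  obtain ⟨w, hw, he⟩ := pred_exists hK hsub h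
  rcases he with ⟨j, j', h1', h2', h3'⟩ | ⟨j, i, h1', h2', h3', h4'⟩ |
    ⟨i, j, h1', h2', h3', h4'⟩ | ⟨i, i', h1', h2', h3'⟩
  · cases h2'
    have : (0 : ℕ) = (j : ℕ) + 1 := h3'
    omega
  · rcases h3' with h3' | h3' <;> cases h3'
  · have hieq : (⟨n - 1, by omega⟩ : Fin n) = i := by
      apply Fin.ext; show n - 1 = (i : ℕ); omega
    rcases h1' with rfl | rfl
    · left; rw [hieq]; exact hw
    · right; rw [hieq]; exact hw
  · rcases h2' with h2' | h2' <;> cases h2'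

lemma stepB0 (hK : H.Consistent satR ∅) (hsub : H.Subgraph (satGraph C)) (hm : 0 < m)
    {u : SatNode n m} (hu : u ∈ H.nodes) (hn : 0 < n)
    (hsh : u = .pos ⟨0, hn⟩ ∨ u = .neg ⟨0, hn⟩) :
    SatNode.cls ⟨m - 1, by omega⟩ ∈ H.nodes := by
  obtain ⟨w, hw, he⟩ := pred_exists hK hsub hu
  rcases he with ⟨j, j', h1', h2', h3'⟩ | ⟨j, i, h1', h2', h3', h4'⟩ |
    ⟨i, j, h1', h2', h3', h4'⟩ | ⟨i, i', h1', h2', h3'⟩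
  · rcases hsh with rfl | rfl <;> cases h2'
  · have hjeq : (⟨m - 1, by omega⟩ : Fin m) = j := by
      apply Fin.ext; show m - 1 = (j : ℕ); omega
    rw [hjeq, ← h1']; exact hw
  · rcases hsh with rfl | rfl <;> cases h3'
  · obtain rfl : i' = ⟨0, hn⟩ := idx_eq hsh h2'
    have : (0 : ℕ) = (i : ℕ) + 1 := h3'
    omega

end SatBwd

section SatBwdMain

variable {n m : ℕ} {C : Fin m → Fin 3 → Fin n × Bool} {H : DataGraph (SatNode n m) SatLab Unit}

lemma allC (hK : H.Consistent satR ∅) (hsub : H.Subgraph (satGraph C)) :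
    ∀ (jv : ℕ) (hj : jv < m), SatNode.cls ⟨jv, hj⟩ ∈ H.nodes →
      ∀ (kv : ℕ) (hk : kv < m), kv ≤ jv → SatNode.cls ⟨kv, hk⟩ ∈ H.nodes := by
  intro jv
  induction jv with
  | zero =>
    intro hj h kv hk hle
    obtain rfl : kv = 0 := by omega
    exact h
  | succ p ih =>
    intro hj h kv hk hle
    rcases Nat.eq_or_lt_of_le hle with rfl | hlt
    · exact h
    · exact ih (by omega) (stepC hK hsub p (by omega) hj h) kv hk (by omega)

lemma allB (hK : H.Consistent satR ∅) (hsub : H.Subgraph (satGraph C)) :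
    ∀ (iv : ℕ) (hi : iv < n),
      (SatNode.pos ⟨iv, hi⟩ ∈ H.nodes ∨ SatNode.neg ⟨iv, hi⟩ ∈ H.nodes) →
      ∀ (kv : ℕ) (hk : kv < n), kv ≤ iv →
        (SatNode.pos ⟨kv, hk⟩ ∈ H.nodes ∨ SatNode.neg ⟨kv, hk⟩ ∈ H.nodes) := by
  intro iv
  induction iv with
  | zero =>
    intro hi h kv hk hle
    obtain rfl : kv = 0 := by omega
    exact h
  | succ p ih =>
    intro hi h kv hk hle
    rcases Nat.eq_or_lt_of_le hle with rfl | hlt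
    · exact h
    · refine ih (by omega) ?_ kv hk (by omega)
      rcases h with h | h
      · exact stepB hK hsub p (by omega) hi h (Or.inl rfl)
      · exact stepB hK hsub p (by omega) hi h (Or.inr rfl)

lemma sat_of_repair (hn : 0 < n) (hm : 0 < m) (hK : H.Consistent satR ∅)
    (hsub : H.Subgraph (satGraph C)) (hne : H.nodes.Nonempty) :
    ∃ f : Fin n → Bool, ∀ j : Fin m, ∃ k : Fin 3, f (C j k).1 = (C j k).2 := by
  classical
  -- step 1 : cls 0 ∈ H
  have hcls0 : SatNode.cls ⟨0, hm⟩ ∈ H.nodes := by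
    obtain ⟨v, hv⟩ := hne
    have hClsLast : ∀ (hl : SatNode.cls ⟨m - 1, by omega⟩ ∈ H.nodes),
        SatNode.cls ⟨0, hm⟩ ∈ H.nodes := fun hl =>
      allC hK hsub (m - 1) (by omega) hl 0 hm (by omega)
    match v with
    | .cls j =>
      exact allC hK hsub j j.isLt hv 0 hm (by omega)
    | .pos i =>
      have hQ0 := allB hK hsub i i.isLt (Or.inl hv) 0 hn (by omega)
      rcases hQ0 with h | h
      · exact hClsLast (stepB0 hK hsub hm h hn (Or.inl rfl))
      · exact hClsLast (stepB0 hK hsub hm h hn (Or.inr rfl))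
    | .neg i =>
      have hQ0 := allB hK hsub i i.isLt (Or.inr hv) 0 hn (by omega)
      rcases hQ0 with h | h
      · exact hClsLast (stepB0 hK hsub hm h hn (Or.inl rfl))
      · exact hClsLast (stepB0 hK hsub hm h hn (Or.inr rfl))
  -- step 2 : one boolean node per variable
  have hQ : ∀ i : Fin n, SatNode.pos i ∈ H.nodes ∨ SatNode.neg i ∈ H.nodes := by
    intro i
    have hlast := stepC0 hK hsub hn hm hcls0
    have := allB hK hsub (n - 1) (by omega) hlast i i.isLt (by omega)
    rcases this with h | h
    · left; exact h
    · right; exact h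
  -- step 3 : all clause nodes
  have hC : ∀ j : Fin m, SatNode.cls j ∈ H.nodes := by
    intro j
    have hQ0 := hQ ⟨0, hn⟩
    have hlast : SatNode.cls ⟨m - 1, by omega⟩ ∈ H.nodes := by
      rcases hQ0 with h | h
      · exact stepB0 hK hsub hm h hn (Or.inl rfl)
      · exact stepB0 hK hsub hm h hn (Or.inr rfl)
    exact allC hK hsub (m - 1) (by omega) hlast j j.isLt (by omega)
  -- assignment
  refine ⟨fun i => if SatNode.pos i ∈ H.nodes then true else false, ?_⟩
  intro j
  -- pick a boolean witness node
  obtain ⟨u0, hu0, hu0sh⟩ : ∃ u0 ∈ H.nodes,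
      u0 = SatNode.pos (⟨0, hn⟩ : Fin n) ∨ u0 = SatNode.neg (⟨0, hn⟩ : Fin n) := by
    rcases hQ ⟨0, hn⟩ with h | h
    · exact ⟨_, h, Or.inl rfl⟩
    · exact ⟨_, h, Or.inr rfl⟩
  have h := hK.1 _ valid_mem_satR _ (hC j) _ hu0
  rcases h with h | h
  · exfalso
    have h' := (psem_lab_iff _ _ _).mp h
    exact edge_valid hsub h'.1 h'.2.1 h'.2.2 ⟨j, ⟨0, hn⟩, rfl, hu0sh⟩
  · obtain ⟨y, hy1, -⟩ := h
    have hy1' := (psem_lab_iff _ _ _).mp hy1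
    have hneeds := edge_needs hsub hy1'.1 hy1'.2.1 hy1'.2.2
    obtain ⟨j', k, hj', hy⟩ := hneeds
    cases hj'
    refine ⟨k, ?_⟩
    have hyH : litNode (C j k) ∈ H.nodes := hy ▸ hy1'.2.1
    by_cases h2 : (C j k).2
    · have : (litNode (C j k) : SatNode n m) = SatNode.pos (C j k).1 := by simp [litNode, h2]
      rw [this] at hyH
      show (if SatNode.pos (C j k).1 ∈ H.nodes then true else false) = (C j k).2
      rw [if_pos hyH, h2]
    · have hb : (C j k).2 = false := (Bool.not_eq_true _).mp h2
      have : (litNode (C j k) : SatNode n m) = SatNode.neg (C j k).1 := by simp [litNode, hb]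
      rw [this] at hyH
      have hnp : SatNode.pos (C j k).1 ∉ H.nodes := fun hp =>
        notBothKey hK hsub _ hp hyH
      show (if SatNode.pos (C j k).1 ∈ H.nodes then true else false) = (C j k).2
      rw [if_neg hnp, hb]

end SatBwdMain

/-- a 3CNF formula is satisfiable iff the reduction data-graph has a
nonempty subset repair with respect to R. -/
theorem stmt11 (n m : ℕ) (hn : 0 < n) (hm : 0 < m)
    (C : Fin m → Fin 3 → Fin n × Bool) :
    (∃ f : Fin n → Bool, ∀ j : Fin m, ∃ k : Fin 3, f (C j k).1 = (C j k).2) ↔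
      ∃ H : DataGraph (SatNode n m) SatLab Unit,
        IsSubsetRepair H (satGraph C) satR ∅ ∧ H.nodes.Nonempty := by
  constructor
  · rintro ⟨f, hf⟩
    exact ⟨repGraph C f,
      ⟨rep_consistent C f hn hm hf, rep_subgraph C f, rep_maximal C f⟩,
      ⟨.cls ⟨0, hm⟩, cls_mem f _⟩⟩
  · rintro ⟨H, ⟨hcons, hsub, -⟩, hne⟩
    exact sat_of_repair hn hm hcons hsub hne
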